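/- For every n ≥ 2 and every k with 2 ≤ k ≤ n, both the derivation zₙ² z_{n−1}² ⋯ zₖ² ∂/∂z_{k−1} and the derivation z₁² z₂² ⋯ z_{k−1}² ∂/∂zₖ belong to the smallest Lie subalgebra of the derivations of ℂ[z₁,…,zₙ] containing U, V′ and V″. -/

import Mathlib

open MvPolynomial

/-- The polynomial vector field `f ∂/∂zₖ`: the derivation of `ℂ[z₁,…,zₙ]`
sending the coordinate `zₖ` to `f` and all other coordinates to `0`. -/
noncomputable def der (n : ℕ) (f : MvPolynomial (Fin n) ℂ) (k : Fin n) :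
    Derivation ℂ (MvPolynomial (Fin n) ℂ) (MvPolynomial (Fin n) ℂ) :=
  MvPolynomial.mkDerivation ℂ (Pi.single k f)

/-- `U = ∂/∂zₙ`  (coordinates are `0`-indexed: `zₖ = X ⟨k-1,_⟩`). -/
noncomputable def U (n : ℕ) :
    Derivation ℂ (MvPolynomial (Fin n) ℂ) (MvPolynomial (Fin n) ℂ) :=
  MvPolynomial.mkDerivation ℂ (fun i => if (i : ℕ) = n - 1 then 1 else 0)

/-- `V′ = ∂/∂zₙ + zₙ⁵ ∂/∂z_{n−1} + zₙ² z_{n−1}⁵ ∂/∂z_{n−2} + ⋯ + zₙ² z_{n−1}² ⋯ z₃² z₂⁵ ∂/∂z₁`,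
i.e. `V′(zₙ) = 1` and `V′(zₖ) = zₙ² z_{n−1}² ⋯ z_{k+2}² · z_{k+1}⁵` for `1 ≤ k ≤ n−1`. -/
noncomputable def V' (n : ℕ) :
    Derivation ℂ (MvPolynomial (Fin n) ℂ) (MvPolynomial (Fin n) ℂ) :=
  MvPolynomial.mkDerivation ℂ (fun i =>
    if h : (i : ℕ) + 1 < n then
      (∏ j ∈ Finset.univ.filter (fun j : Fin n => (i : ℕ) + 1 < (j : ℕ)), (X j) ^ 2) *
        (X (⟨(i : ℕ) + 1, h⟩ : Fin n)) ^ 5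
    else 1)

/-- `V″ = ∂/∂z₁ + z₁⁵ ∂/∂z₂ + z₁² z₂⁵ ∂/∂z₃ + ⋯ + z₁² z₂² ⋯ z_{n−2}² z_{n−1}⁵ ∂/∂zₙ`,
i.e. `V″(z₁) = 1` and `V″(zₖ) = z₁² z₂² ⋯ z_{k−2}² · z_{k−1}⁵` for `2 ≤ k ≤ n`. -/
noncomputable def V'' (n : ℕ) :
    Derivation ℂ (MvPolynomial (Fin n) ℂ) (MvPolynomial (Fin n) ℂ) :=
  MvPolynomial.mkDerivation ℂ (fun i =>
    if h : 0 < (i : ℕ) then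
      (∏ j ∈ Finset.univ.filter (fun j : Fin n => (j : ℕ) < (i : ℕ) - 1), (X j) ^ 2) *
        (X (⟨(i : ℕ) - 1, lt_of_le_of_lt (Nat.sub_le _ _) i.isLt⟩ : Fin n)) ^ 5
    else 1)

/-!
Bracketing with a constant vector field differentiates coefficients:
`⁅∂ₘ, ∑ vₖ ∂ₖ⁆ = ∑ (∂ₘ vₖ) ∂ₖ`. When all coefficients are monomials, `ad(∂ₘ)ᵉ` therefore kills
every component whose coefficient has degree `< e` in `zₘ`, and a single component survives
when it is the only one of degree `≥ e`. Starting from `U = ∂/∂zₙ`, downward induction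
yields every `∂/∂zₖ`: `ad(∂/∂z_{k+1})⁵ V′` isolates `120 zₙ² ⋯ z_{k+2}² ∂/∂zₖ`, and the squares
are then removed one variable at a time by `ad(∂/∂zⱼ)²`. Finally
`ad(∂/∂zₖ)³ V′ = 60 zₙ² ⋯ zₖ² ∂/∂z_{k−1}` and `ad(∂/∂z_{k−1})³ V″ = 60 z₁² ⋯ z_{k−1}² ∂/∂zₖ`.
-/

namespace MvPolynomial

section Monomial

variable {σ R : Type*} [CommSemiring R]

theorem prod_X_pow_eq_monomial_equivFunOnFinite [Fintype σ] (a : σ → ℕ) :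
    ∏ j, (X j : MvPolynomial σ R) ^ a j = monomial (Finsupp.equivFunOnFinite.symm a) 1 := by
  classical
  rw [prod_X_pow]
  congr 2
  ext j
  simp [Finsupp.indicator_apply]

theorem prod_filter_X_sq [Fintype σ] (P : σ → Prop) [DecidablePred P] :
    ∏ j ∈ Finset.univ.filter P, (X j : MvPolynomial σ R) ^ 2 =
      monomial (Finsupp.equivFunOnFinite.symm fun j => if P j then 2 else 0) 1 := by
  rw [Finset.prod_filter, ← prod_X_pow_eq_monomial_equivFunOnFinite]
  congr 1
  ext j
  split_ifs <;> simp

theorem iterate_pderiv_monomial (i : σ) (s : σ →₀ ℕ) (a : R) (k : ℕ) :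
    (pderiv i)^[k] (monomial s a) =
      monomial (s - Finsupp.single i k) (a * (s i).descFactorial k) := by
  induction k with
  | zero => simp
  | succ k ih =>
    rw [Function.iterate_succ_apply', ih, pderiv_monomial, tsub_tsub, ← Finsupp.single_add,
      Nat.descFactorial_succ, Nat.cast_mul, Finsupp.tsub_apply, Finsupp.single_eq_same]
    ring_nf

end Monomial

section Bracket

variable {σ R : Type*} [CommRing R]

local notation "𝔛" => Derivation R (MvPolynomial σ R) (MvPolynomial σ R)

theorem lie_pderiv_mkDerivation (i : σ) (v : σ → MvPolynomial σ R) :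
    ⁅(pderiv i : 𝔛), mkDerivation R v⁆ = mkDerivation R (fun k => pderiv i (v k)) := by
  classical
  refine derivation_ext fun k => ?_
  rw [Derivation.commutator_apply, mkDerivation_X, mkDerivation_X, pderiv_X, Pi.single_apply]
  split_ifs <;> simp

theorem iterate_lie_pderiv_mkDerivation (i : σ) (v : σ → MvPolynomial σ R) (k : ℕ) :
    (⁅(pderiv i : 𝔛), ·⁆)^[k] (mkDerivation R v) =
      mkDerivation R (fun j => (pderiv i)^[k] (v j)) := by
  induction k with
  | zero => rfl
  | succ k ih =>
    rw [Function.iterate_succ_apply', ih, lie_pderiv_mkDerivation]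
    simp only [Function.iterate_succ_apply']

variable [DecidableEq σ]

theorem iterate_lie_pderiv_mkDerivation_single (i j : σ) (p : MvPolynomial σ R) (k : ℕ) :
    (⁅(pderiv i : 𝔛), ·⁆)^[k] (mkDerivation R (Pi.single j p)) =
      mkDerivation R (Pi.single j ((pderiv i)^[k] p)) := by
  rw [iterate_lie_pderiv_mkDerivation]
  congr 1
  ext1 l
  exact Pi.apply_single (fun _ => (pderiv i)^[k]) (fun _ => iterate_map_zero _ _) j p l

theorem iterate_lie_pderiv_mkDerivation_monomial (m i : σ) (s : σ → σ →₀ ℕ) (e : ℕ)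
    (h : ∀ k ≠ i, s k m < e) :
    (⁅(pderiv m : 𝔛), ·⁆)^[e] (mkDerivation R fun k => monomial (s k) (1 : R)) =
      mkDerivation R
        (Pi.single i (monomial (s i - Finsupp.single m e) ((s i m).descFactorial e : R))) := by
  rw [iterate_lie_pderiv_mkDerivation]
  congr 1
  ext1 k
  rw [iterate_pderiv_monomial, one_mul]
  rcases eq_or_ne k i with rfl | hk
  · rw [Pi.single_eq_same]
  · rw [Pi.single_eq_of_ne hk, Nat.descFactorial_eq_zero_iff_lt.mpr (h k hk), Nat.cast_zero,
      monomial_zero]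

theorem mkDerivation_single_monomial_eq_smul (i : σ) (s : σ →₀ ℕ) (c : R) :
    mkDerivation R (Pi.single i (monomial s c)) =
      c • mkDerivation R (Pi.single i (monomial s 1)) := by
  refine derivation_ext fun k => ?_
  rw [Derivation.smul_apply, mkDerivation_X, mkDerivation_X, Pi.single_apply, Pi.single_apply]
  split_ifs <;> simp [smul_monomial]

end Bracket

end MvPolynomial

theorem LieSubalgebra.iterate_lie_mem {R L : Type*} [CommRing R] [LieRing L] [LieAlgebra R L]
    (K : LieSubalgebra R L) {x y : L} (hx : x ∈ K) (hy : y ∈ K) (k : ℕ) :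
    (⁅x, ·⁆)^[k] y ∈ K := by
  induction k with
  | zero => exact hy
  | succ k ih => rw [Function.iterate_succ_apply']; exact K.lie_mem hx ih

namespace MvPolynomial

variable {σ K : Type*} [Field K] [DecidableEq σ]
  {L : LieSubalgebra K (Derivation K (MvPolynomial σ K) (MvPolynomial σ K))}

local notation "𝔛" => Derivation K (MvPolynomial σ K) (MvPolynomial σ K)

theorem mkDerivation_single_monomial_one_mem_of_mem {i : σ} {s : σ →₀ ℕ} {c : K} (hc : c ≠ 0)
    (h : mkDerivation K (Pi.single i (monomial s c)) ∈ L) :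
    mkDerivation K (Pi.single i (monomial s 1)) ∈ L := by
  rw [mkDerivation_single_monomial_eq_smul] at h
  simpa [hc] using L.smul_mem c⁻¹ h

variable [CharZero K]

theorem mkDerivation_single_monomial_mem_of_isolated {m i : σ} {s : σ → σ →₀ ℕ} {e : ℕ}
    (hm : (pderiv m : 𝔛) ∈ L) (hv : (mkDerivation K fun k => monomial (s k) 1) ∈ L)
    (hk : ∀ k ≠ i, s k m < e) (hi : e ≤ s i m) :
    mkDerivation K (Pi.single i (monomial (s i - Finsupp.single m e) 1)) ∈ L := by
  refine mkDerivation_single_monomial_one_mem_of_mem (c := ((s i m).descFactorial e : K))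
    (mod_cast (Nat.descFactorial_pos.mpr hi).ne') ?_
  rw [← iterate_lie_pderiv_mkDerivation_monomial m i s e hk]
  exact L.iterate_lie_mem hm hv e

theorem pderiv_mem_of_mkDerivation_single_monomial_mem {i : σ} (s : σ →₀ ℕ)
    (hs : ∀ m ∈ s.support, (pderiv m : 𝔛) ∈ L)
    (h : mkDerivation K (Pi.single i (monomial s 1)) ∈ L) : (pderiv i : 𝔛) ∈ L := by
  induction s using Finsupp.induction with
  | zero => rwa [pderiv_def, ← C_1, ← monomial_zero']
  | single_add a b f ha hb ih =>
    rw [Finsupp.support_single_add ha hb] at hs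
    refine ih (fun m hm => hs m (Finset.mem_cons_of_mem hm))
      (mkDerivation_single_monomial_one_mem_of_mem (c := (b.factorial : K))
        (mod_cast b.factorial_ne_zero) ?_)
    -- `ad(∂ₐ)ᵇ` strips the factor `zₐᵇ` at the cost of the scalar `b!`.
    have hstrip := L.iterate_lie_mem (hs a (Finset.mem_cons_self a _)) h b
    have hsa : (Finsupp.single a b + f) a = b := by simp [Finsupp.notMem_support_iff.mp ha]
    rwa [iterate_lie_pderiv_mkDerivation_single, iterate_pderiv_monomial, hsa,
      Nat.descFactorial_self, add_tsub_cancel_left, one_mul] at hstrip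

end MvPolynomial

noncomputable def exponentV' (n : ℕ) (k : Fin n) : Fin n →₀ ℕ :=
  Finsupp.equivFunOnFinite.symm fun j =>
    if (j : ℕ) = k + 1 then 5 else if (k : ℕ) + 1 < j then 2 else 0

noncomputable def exponentV'' (n : ℕ) (k : Fin n) : Fin n →₀ ℕ :=
  Finsupp.equivFunOnFinite.symm fun j =>
    if (j : ℕ) + 1 = k then 5 else if (j : ℕ) + 1 < k then 2 else 0

section Generators

variable {n : ℕ}

local notation "𝔤" => LieSubalgebra.lieSpan ℂ
  (Derivation ℂ (MvPolynomial (Fin n) ℂ) (MvPolynomial (Fin n) ℂ)) {U n, V' n, V'' n}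

theorem V'_eq_mkDerivation_monomial :
    V' n = mkDerivation ℂ fun k => monomial (exponentV' n k) 1 := by
  refine derivation_ext fun k => ?_
  rw [V', mkDerivation_X, mkDerivation_X]
  split_ifs
  · rw [prod_filter_X_sq, X_pow_eq_monomial, monomial_mul, one_mul]
    congr 2
    ext j
    simp [exponentV', Finsupp.single_apply, Fin.ext_iff]
    split_ifs <;> omega
  · rw [← C_1, ← monomial_zero']
    congr 2
    ext j
    simp [exponentV']
    split_ifs <;> omega

theorem V''_eq_mkDerivation_monomial :
    V'' n = mkDerivation ℂ fun k => monomial (exponentV'' n k) 1 := by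
  refine derivation_ext fun k => ?_
  rw [V'', mkDerivation_X, mkDerivation_X]
  split_ifs
  · rw [prod_filter_X_sq, X_pow_eq_monomial, monomial_mul, one_mul]
    congr 2
    ext j
    simp [exponentV'', Finsupp.single_apply, Fin.ext_iff]
    split_ifs <;> omega
  · rw [← C_1, ← monomial_zero']
    congr 2
    ext j
    simp [exponentV'']
    split_ifs <;> omega

theorem U_eq_pderiv (i : Fin n) (hi : (i : ℕ) + 1 = n) : U n = pderiv i := by
  rw [U, pderiv_def]
  congr 1
  funext j
  simp only [Pi.single_apply, Fin.ext_iff]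
  split_ifs <;> first | rfl | omega

theorem mkDerivation_exponentV'_mem :
    (mkDerivation ℂ fun k => monomial (exponentV' n k) (1 : ℂ)) ∈ 𝔤 :=
  V'_eq_mkDerivation_monomial ▸ LieSubalgebra.subset_lieSpan (by simp)

theorem mkDerivation_exponentV''_mem :
    (mkDerivation ℂ fun k => monomial (exponentV'' n k) (1 : ℂ)) ∈ 𝔤 :=
  V''_eq_mkDerivation_monomial ▸ LieSubalgebra.subset_lieSpan (by simp)

theorem pderiv_mem_lieSpan (i : Fin n) :
    (pderiv i : Derivation ℂ (MvPolynomial (Fin n) ℂ) (MvPolynomial (Fin n) ℂ)) ∈ 𝔤 := by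
  induction i using WellFoundedGT.induction with
  | _ i ih =>
  by_cases hi : (i : ℕ) + 1 < n
  · set m : Fin n := ⟨i + 1, hi⟩
    refine pderiv_mem_of_mkDerivation_single_monomial_mem
      (exponentV' n i - Finsupp.single m 5) (fun j hj => ih j ?_) ?_
    · simp [exponentV', Finsupp.single_apply, m, Fin.ext_iff] at hj
      rw [Fin.lt_def]
      split_ifs at hj <;> omega
    refine mkDerivation_single_monomial_mem_of_isolated (ih m (Nat.lt_succ_self _))
      mkDerivation_exponentV'_mem (fun k hk => ?_) (by simp [exponentV', m])
    rw [Ne, Fin.ext_iff] at hk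
    simp [exponentV', m]
    split_ifs <;> omega
  · rw [← U_eq_pderiv i (by omega)]
    exact LieSubalgebra.subset_lieSpan (by simp)

theorem der_prod_sq_ge_mem (i : Fin n) (hi : 1 ≤ (i : ℕ)) :
    der n (∏ j ∈ Finset.univ.filter (fun j : Fin n => (i : ℕ) ≤ (j : ℕ)), (X j) ^ 2)
      ⟨(i : ℕ) - 1, lt_of_le_of_lt (Nat.sub_le _ _) i.isLt⟩ ∈ 𝔤 := by
  set i' : Fin n := ⟨(i : ℕ) - 1, lt_of_le_of_lt (Nat.sub_le _ _) i.isLt⟩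
  have hexp : exponentV' n i' - Finsupp.single i 3 =
      Finsupp.equivFunOnFinite.symm fun j : Fin n => if (i : ℕ) ≤ j then 2 else 0 := by
    ext j
    simp [exponentV', i', Finsupp.single_apply, Fin.ext_iff]
    split_ifs <;> omega
  rw [prod_filter_X_sq, ← hexp]
  refine mkDerivation_single_monomial_mem_of_isolated (pderiv_mem_lieSpan i)
    mkDerivation_exponentV'_mem (fun k hk => ?_) ?_
  · simp [exponentV', i', Fin.ext_iff] at hk ⊢
    split_ifs <;> omega
  · simp [exponentV', i']
    split_ifs <;> omega

theorem der_prod_sq_lt_mem (i : Fin n) (hi : 1 ≤ (i : ℕ)) :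
    der n (∏ j ∈ Finset.univ.filter (fun j : Fin n => (j : ℕ) < (i : ℕ)), (X j) ^ 2) i ∈ 𝔤 := by
  set i' : Fin n := ⟨(i : ℕ) - 1, lt_of_le_of_lt (Nat.sub_le _ _) i.isLt⟩
  have hexp : exponentV'' n i - Finsupp.single i' 3 =
      Finsupp.equivFunOnFinite.symm fun j : Fin n => if (j : ℕ) < i then 2 else 0 := by
    ext j
    simp [exponentV'', i', Finsupp.single_apply, Fin.ext_iff]
    split_ifs <;> omega
  rw [prod_filter_X_sq, ← hexp]
  refine mkDerivation_single_monomial_mem_of_isolated (pderiv_mem_lieSpan i')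
    mkDerivation_exponentV''_mem (fun k hk => ?_) ?_
  · simp [exponentV'', i', Fin.ext_iff] at hk ⊢
    split_ifs <;> omega
  · simp [exponentV'', i']
    split_ifs <;> omega

end Generators

/-- Coordinates are `0`-indexed: `i = k − 1`. -/
theorem square_products_mem_lieSpan_UV'V''_general (n : ℕ) (i : Fin n)
    (hi : 1 ≤ (i : ℕ)) :
    der n (∏ j ∈ Finset.univ.filter (fun j : Fin n => (i : ℕ) ≤ (j : ℕ)), (X j) ^ 2)
        (⟨(i : ℕ) - 1, lt_of_le_of_lt (Nat.sub_le _ _) i.isLt⟩ : Fin n) ∈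
      LieSubalgebra.lieSpan ℂ (Derivation ℂ (MvPolynomial (Fin n) ℂ) (MvPolynomial (Fin n) ℂ))
        {U n, V' n, V'' n} ∧
    der n (∏ j ∈ Finset.univ.filter (fun j : Fin n => (j : ℕ) < (i : ℕ)), (X j) ^ 2) i ∈
      LieSubalgebra.lieSpan ℂ (Derivation ℂ (MvPolynomial (Fin n) ℂ) (MvPolynomial (Fin n) ℂ))
        {U n, V' n, V'' n} :=
  ⟨der_prod_sq_ge_mem i hi, der_prod_sq_lt_mem i hi⟩

/-- For every `n ≥ 2` and every `k` with `2 ≤ k ≤ n`, both `zₙ² z_{n−1}² ⋯ zₖ² ∂/∂z_{k−1}`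
and `z₁² z₂² ⋯ z_{k−1}² ∂/∂zₖ` lie in the smallest Lie subalgebra of the derivations of
`ℂ[z₁,…,zₙ]` containing `U`, `V′`, `V″`.  (`0`-indexed: `i = k − 1 ≥ 1`.) -/
theorem square_products_mem_lieSpan_UV'V'' (n : ℕ) (hn : 2 ≤ n) (i : Fin n)
    (hi : 1 ≤ (i : ℕ)) :
    der n (∏ j ∈ Finset.univ.filter (fun j : Fin n => (i : ℕ) ≤ (j : ℕ)), (X j) ^ 2)
        (⟨(i : ℕ) - 1, lt_of_le_of_lt (Nat.sub_le _ _) i.isLt⟩ : Fin n) ∈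
      LieSubalgebra.lieSpan ℂ (Derivation ℂ (MvPolynomial (Fin n) ℂ) (MvPolynomial (Fin n) ℂ))
        {U n, V' n, V'' n} ∧
    der n (∏ j ∈ Finset.univ.filter (fun j : Fin n => (j : ℕ) < (i : ℕ)), (X j) ^ 2) i ∈
      LieSubalgebra.lieSpan ℂ (Derivation ℂ (MvPolynomial (Fin n) ℂ) (MvPolynomial (Fin n) ℂ))
        {U n, V' n, V'' n} :=
  square_products_mem_lieSpan_UV'V''_general n i hi
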